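/- Let N, k be natural numbers, let i : Fin k → Fin N be a list of indices, and let x : Fin N → ℝ. Then the k-th mixed partial derivative ∂/∂x_{i 1} ⋯ ∂/∂x_{i k} of the function x ↦ exp((1/2)·Σ_{j} (x j)²) equals exp((1/2)·Σ_{j} (x j)²) multiplied by the sum, over all involutions σ of Fin k (permutations σ with σ ∘ σ = id), of the product over a ∈ Fin k of: (x (i a)) if σ a = a, and the indicator value (1 if i (σ a) = i a, else 0) if σ a ≠ a. -/

import Mathlib

/-- The partial derivative of `f : (Fin N → ℝ) → ℝ` in the `j`-th coordinate direction. -/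
noncomputable def partialDeriv' {N : ℕ} (j : Fin N) (f : (Fin N → ℝ) → ℝ) :
    (Fin N → ℝ) → ℝ :=
  fun y => fderiv ℝ f y (Pi.single j 1)

/-- The iterated mixed partial derivative `∂/∂x_{i 0} ⋯ ∂/∂x_{i (k-1)}` along the
list of indices `i : Fin k → Fin N`. -/
noncomputable def mixedPartialAlong {N k : ℕ} (i : Fin k → Fin N)
    (f : (Fin N → ℝ) → ℝ) : (Fin N → ℝ) → ℝ :=
  (List.ofFn i).foldr (fun j g => partialDeriv' j g) f

/-! With `G = exp q`, `q = ½ ∑ⱼ xⱼ²`, one has `∂ⱼ (G P) = G (xⱼ P + ∂ⱼ P)` for every polynomial `P`,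
so the mixed partial derivative is `G` times the polynomial obtained from `1` by applying the
operators `P ↦ xⱼ P + ∂ⱼ P` along the index list. The Wick polynomial `∑_σ ∏_a (…)` obeys the same
recursion: among the involutions of `Fin (k + 1)`, those fixing `0` give `xⱼ W`, and those pairing
`0` with `b + 1` give `∂ⱼ W` by the Leibniz rule, because pairing the new index with `b` amounts to
differentiating the factor `x_{i b}` of the fixed point `b`. -/

open MvPolynomial Finset Equiv

theorem Derivation.leibniz_prod {R A M ι : Type*} [CommSemiring R] [CommSemiring A]
    [Algebra R A] [AddCommMonoid M] [Module A M] [Module R M] [DecidableEq ι]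
    (D : Derivation R A M) (s : Finset ι) (f : ι → A) :
    D (∏ a ∈ s, f a) = ∑ b ∈ s, (∏ a ∈ s.erase b, f a) • D (f b) := by
  induction s using Finset.induction_on with
  | empty => simp
  | @insert c s hc ih =>
    rw [prod_insert hc, Derivation.leibniz, ih, sum_insert hc, erase_insert hc, smul_sum, add_comm]
    congr 1
    refine sum_congr rfl fun b hb => ?_
    have hcb : c ≠ b := fun h => hc (h ▸ hb)
    rw [erase_insert_of_ne hcb, prod_insert fun h => hc (mem_of_mem_erase h), smul_smul]

section Calculus

variable {𝕜 ι : Type*} [NontriviallyNormedField 𝕜] [Fintype ι]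

theorem MvPolynomial.differentiable_eval (P : MvPolynomial ι 𝕜) :
    Differentiable 𝕜 (fun z : ι → 𝕜 => eval z P) := by
  induction P using MvPolynomial.induction_on with
  | C a => simp
  | add p q hp hq => simp only [map_add]; exact hp.add hq
  | mul_X p n hp => simp only [map_mul, eval_X]; exact hp.mul (differentiable_apply n)

theorem MvPolynomial.fderiv_eval_apply_single [DecidableEq ι] (P : MvPolynomial ι 𝕜)
    (y : ι → 𝕜) (j : ι) :
    fderiv 𝕜 (fun z => eval z P) y (Pi.single j 1) = eval y (pderiv j P) := by
  induction P using MvPolynomial.induction_on with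
  | C a => simp
  | add p q hp hq =>
    simp only [map_add]
    rw [fderiv_fun_add (differentiable_eval p y) (differentiable_eval q y)]
    simp [hp, hq]
  | mul_X p n hp =>
    simp only [map_mul, eval_X]
    rw [fderiv_fun_mul (differentiable_eval p y) (differentiable_apply n y),
      (hasFDerivAt_apply n y).fderiv]
    simp [hp, Pi.single_apply, pderiv_X, eq_comm, apply_ite (eval y)]

end Calculus

section GaussianTimesPolynomial

variable {N : ℕ}

theorem partialDeriv'_exp_eval_mul_eval (j : Fin N) (Q P : MvPolynomial (Fin N) ℝ) :
    partialDeriv' j (fun y => Real.exp (eval y Q) * eval y P) =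
      fun y => Real.exp (eval y Q) * eval y (pderiv j Q * P + pderiv j P) := by
  funext y
  have hQ := (differentiable_eval Q y).hasFDerivAt.exp
  have hP := (differentiable_eval P y).hasFDerivAt
  rw [partialDeriv', (hQ.fun_mul hP).fderiv]
  simp only [add_apply, smul_apply, smul_eq_mul,
    fderiv_eval_apply_single, map_add, map_mul]
  ring

theorem mixedPartialAlong_exp_eval_mul_eval {k : ℕ} (i : Fin k → Fin N)
    (Q P : MvPolynomial (Fin N) ℝ) :
    mixedPartialAlong i (fun y => Real.exp (eval y Q) * eval y P) =
      fun y => Real.exp (eval y Q) *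
        eval y ((List.ofFn i).foldr (fun j R => pderiv j Q * R + pderiv j R) P) := by
  unfold mixedPartialAlong
  induction List.ofFn i with
  | nil => rfl
  | cons j l ih => rw [List.foldr_cons, List.foldr_cons, ih, partialDeriv'_exp_eval_mul_eval]

end GaussianTimesPolynomial

noncomputable def halfSumSq (ι R : Type*) [Fintype ι] [Semifield R] : MvPolynomial ι R :=
  C 2⁻¹ * ∑ j, X j ^ 2

theorem pderiv_halfSumSq {ι R : Type*} [Fintype ι] [DecidableEq ι] [Semifield R] [NeZero (2 : R)]
    (j : ι) : pderiv j (halfSumSq ι R) = X j := by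
  have h2 : (C 2⁻¹ * 2 : MvPolynomial ι R) = 1 := by
    rw [← map_ofNat C 2, ← C_mul, inv_mul_cancel₀ two_ne_zero, C_1]
  simp [halfSumSq, pderiv_X, Pi.single_apply, ← mul_assoc, h2]

theorem eval_halfSumSq {ι R : Type*} [Fintype ι] [Semifield R] (x : ι → R) :
    eval x (halfSumSq ι R) = (1 / 2) * ∑ j, (x j) ^ 2 := by
  simp [halfSumSq]

namespace Equiv.Perm

variable {k : ℕ}

theorem decomposeFin_symm_zero_apply_succ (τ : Perm (Fin k)) (a : Fin k) :
    decomposeFin.symm (0, τ) a.succ = (τ a).succ := by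
  rw [decomposeFin_symm_apply_succ, swap_self, refl_apply]

theorem decomposeFin_symm_succ_apply_succ (b : Fin k) (τ : Perm (Fin k)) (a : Fin k) :
    decomposeFin.symm (b.succ, τ) a.succ = if τ a = b then 0 else (τ a).succ := by
  rw [decomposeFin_symm_apply_succ]
  split_ifs with h
  · rw [h, swap_apply_right]
  · exact swap_apply_of_ne_of_ne (Fin.succ_ne_zero _) (by simpa [Fin.succ_inj] using h)

theorem involutive_decomposeFin_symm_zero_iff (τ : Perm (Fin k)) :
    Function.Involutive (decomposeFin.symm (0, τ)) ↔ Function.Involutive τ := by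
  refine ⟨fun h a => Fin.succ_injective _ ?_, fun h x => Fin.cases ?_ (fun a => ?_) x⟩
  · simpa only [decomposeFin_symm_zero_apply_succ] using h a.succ
  · rw [decomposeFin_symm_apply_zero, decomposeFin_symm_apply_zero]
  · rw [decomposeFin_symm_zero_apply_succ, decomposeFin_symm_zero_apply_succ, h a]

theorem involutive_decomposeFin_symm_succ_iff (b : Fin k) (τ : Perm (Fin k)) :
    Function.Involutive (decomposeFin.symm (b.succ, τ)) ↔ Function.Involutive τ ∧ τ b = b := by
  constructor
  · intro h
    have hb : τ b = b := by
      have h0 := h 0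
      rw [decomposeFin_symm_apply_zero, decomposeFin_symm_succ_apply_succ] at h0
      split_ifs at h0 with hb
      exacts [hb, absurd h0 (Fin.succ_ne_zero _)]
    refine ⟨fun a => ?_, hb⟩
    have ha := h a.succ
    rw [decomposeFin_symm_succ_apply_succ] at ha
    split_ifs at ha with h1
    · rw [decomposeFin_symm_apply_zero, Fin.succ_inj] at ha
      rw [h1, hb, ha]
    · rw [decomposeFin_symm_succ_apply_succ] at ha
      split_ifs at ha
      exacts [absurd ha.symm (Fin.succ_ne_zero a), Fin.succ_injective _ ha]
  · rintro ⟨hτ, hb⟩ x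
    refine Fin.cases ?_ (fun a => ?_) x
    · rw [decomposeFin_symm_apply_zero, decomposeFin_symm_succ_apply_succ, if_pos hb]
    · rw [decomposeFin_symm_succ_apply_succ]
      split_ifs with h1
      · rw [decomposeFin_symm_apply_zero, τ.injective (h1.trans hb.symm)]
      · have hab : τ (τ a) ≠ b := fun h2 => h1 (by rw [← hτ (τ a), h2, hb])
        rw [decomposeFin_symm_succ_apply_succ, if_neg hab, hτ a]

end Equiv.Perm

section Wick

open Equiv.Perm

variable {R ι : Type*} [CommSemiring R] [DecidableEq ι] {k : ℕ}

noncomputable def wickFactor (i : Fin k → ι) (σ : Perm (Fin k)) (a : Fin k) : MvPolynomial ι R :=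
  if σ a = a then X (i a) else if i (σ a) = i a then 1 else 0

noncomputable def wickPolynomial (i : Fin k → ι) : MvPolynomial ι R :=
  ∑ σ ∈ univ.filter (fun σ : Perm (Fin k) => ⇑σ ∘ ⇑σ = id), ∏ a, wickFactor i σ a

theorem pderiv_wickFactor_of_ne (j : ι) (i : Fin k → ι) {τ : Perm (Fin k)} {b : Fin k}
    (hb : τ b ≠ b) : pderiv j (wickFactor (R := R) i τ b) = 0 := by
  rw [wickFactor, if_neg hb]
  split_ifs <;> simp

theorem prod_wickFactor_cons_decomposeFin_symm_zero (j : ι) (i : Fin k → ι)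
    (τ : Perm (Fin k)) :
    ∏ a, wickFactor (R := R) (Fin.cons j i) (decomposeFin.symm (0, τ)) a =
      X j * ∏ a, wickFactor i τ a := by
  simp [Fin.prod_univ_succ, wickFactor]

-- Both members of the pair `{0, b.succ}` contribute `δ_{j, i b}`, and the delta is idempotent.
theorem prod_wickFactor_cons_decomposeFin_symm_succ (j : ι) (i : Fin k → ι)
    {τ : Perm (Fin k)} {b : Fin k} (hτ : Function.Involutive τ) (hb : τ b = b) :
    ∏ a, wickFactor (R := R) (Fin.cons j i) (decomposeFin.symm (b.succ, τ)) a =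
      (∏ a ∈ univ.erase b, wickFactor i τ a) * pderiv j (wickFactor i τ b) := by
  have hrest : ∀ a ∈ univ.erase b, wickFactor (R := R) (Fin.cons j i)
      (decomposeFin.symm (b.succ, τ)) a.succ = wickFactor i τ a := by
    intro a ha
    have h : τ a ≠ b := fun h => ne_of_mem_erase ha (by rw [← hτ a, h, hb])
    simp only [wickFactor, decomposeFin_symm_succ_apply_succ, if_neg h, Fin.succ_inj,
      Fin.cons_succ]
  have hδ : pderiv j (wickFactor (R := R) i τ b) = if i b = j then 1 else 0 := by
    simp [wickFactor, hb, pderiv_X, Pi.single_apply, eq_comm]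
  have h0 : wickFactor (R := R) (Fin.cons j i) (decomposeFin.symm (b.succ, τ)) 0 =
      if i b = j then 1 else 0 := by
    simp [wickFactor, decomposeFin_symm_apply_zero]
  have hsucc : wickFactor (R := R) (Fin.cons j i) (decomposeFin.symm (b.succ, τ)) b.succ =
      if i b = j then 1 else 0 := by
    simp only [wickFactor, decomposeFin_symm_succ_apply_succ, if_pos hb]
    simp [eq_comm]
  rw [Fin.prod_univ_succ, ← mul_prod_erase univ _ (mem_univ b), prod_congr rfl hrest, hδ, h0,
    hsucc, ← mul_assoc, mul_comm]
  split_ifs <;> simp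

theorem wickPolynomial_cons (j : ι) (i : Fin k → ι) :
    wickPolynomial (R := R) (Fin.cons j i) =
      X j * wickPolynomial i + pderiv j (wickPolynomial i) := by
  classical
  have hinv {n : ℕ} (σ : Perm (Fin n)) : ⇑σ ∘ ⇑σ = id ↔ Function.Involutive σ := funext_iff
  simp only [wickPolynomial, sum_filter, hinv]
  rw [← decomposeFin.symm.sum_comp, Fintype.sum_prod_type, Fin.sum_univ_succ, mul_sum, map_sum,
    sum_comm]
  congr 1
  · refine sum_congr rfl fun τ _ => ?_
    rw [involutive_decomposeFin_symm_zero_iff, prod_wickFactor_cons_decomposeFin_symm_zero]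
    split_ifs <;> simp
  · refine sum_congr rfl fun τ _ => ?_
    split_ifs with hτ
    · rw [Derivation.leibniz_prod]
      refine sum_congr rfl fun b _ => ?_
      by_cases hb : τ b = b
      · rw [if_pos ((involutive_decomposeFin_symm_succ_iff b τ).2 ⟨hτ, hb⟩),
          prod_wickFactor_cons_decomposeFin_symm_succ j i hτ hb, smul_eq_mul]
      · rw [if_neg fun h => hb ((involutive_decomposeFin_symm_succ_iff b τ).1 h).2,
          pderiv_wickFactor_of_ne j i hb, smul_zero]
    · simp [involutive_decomposeFin_symm_succ_iff, hτ]

theorem foldr_mul_X_add_pderiv_eq_wickPolynomial (i : Fin k → ι) :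
    (List.ofFn i).foldr (fun j P => X j * P + pderiv j P) 1 = wickPolynomial (R := R) i := by
  induction k with
  | zero =>
    have hone : univ.filter (fun σ : Perm (Fin 0) => ⇑σ ∘ ⇑σ = id) = {1} := by
      ext σ
      simp [Subsingleton.elim σ 1]
    rw [wickPolynomial, hone, sum_singleton]
    simp
  | succ k ih =>
    rw [List.ofFn_succ, List.foldr_cons, ih, ← wickPolynomial_cons]
    exact congrArg wickPolynomial (Fin.cons_self_tail i)

theorem eval_wickPolynomial (i : Fin k → ι) (x : ι → R) :
    eval x (wickPolynomial i) =
      ∑ σ ∈ univ.filter (fun σ : Perm (Fin k) => ⇑σ ∘ ⇑σ = id),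
        ∏ a, (if σ a = a then x (i a) else if i (σ a) = i a then 1 else 0) := by
  simp [wickPolynomial, wickFactor, apply_ite (eval x)]

end Wick

/-- Wick's theorem (finite-dimensional form): the `k`-th mixed partial derivative of
`exp ((1/2) ∑ j, (x j)^2)` equals the same exponential times the sum over all
involutions `σ` of `Fin k`, where each fixed point `a` of `σ` contributes the factor
`x (i a)` and each two-cycle `{a, σ a}` contributes the Kronecker delta `δ_{i (σ a), i a}`. -/
theorem mixedPartial_exp_sq_eq_sum_involutions (N k : ℕ) (i : Fin k → Fin N)
    (x : Fin N → ℝ) :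
    mixedPartialAlong i (fun y => Real.exp ((1 / 2) * ∑ j, (y j) ^ 2)) x =
      Real.exp ((1 / 2) * ∑ j, (x j) ^ 2) *
        ∑ σ ∈ Finset.univ.filter (fun σ : Equiv.Perm (Fin k) => σ ∘ σ = id),
          ∏ a, (if σ a = a then x (i a) else (if i (σ a) = i a then 1 else 0)) := by
  have hgauss : (fun y : Fin N → ℝ => Real.exp ((1 / 2) * ∑ j, (y j) ^ 2)) =
      fun y => Real.exp (eval y (halfSumSq (Fin N) ℝ)) * eval y 1 := by
    simp only [eval_halfSumSq, map_one, mul_one]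
  rw [hgauss, mixedPartialAlong_exp_eval_mul_eval]
  simp only [pderiv_halfSumSq, foldr_mul_X_add_pderiv_eq_wickPolynomial, eval_wickPolynomial,
    eval_halfSumSq]
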